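/- arXiv:2507.16503 — 4 statements merged into one kernel-verified Lean document; each statement's English description precedes it below -/
import Mathlib

section
/- Let p be a prime, and let f(X) ∈ ℤ[X] be an irreducible polynomial of degree 2 with a real root α ∈ ℝ and a root β ∈ ℚ_p. Then there exists a constant c > 0 such that for all nonzero integers q, r one has max(|q|,|r|)·|qα−r|·|qβ−r|_p ≥ c. -/
/-- Evaluation of a degree-2 integer polynomial in any commutative ring. -/
lemma aux_eval_quad {R : Type*} [CommRing R] (f : Polynomial ℤ) (hdeg : f.natDegree = 2)
    (x : R) :
    Polynomial.aeval x f = (f.coeff 2 : R) * x ^ 2 + (f.coeff 1 : R) * x + (f.coeff 0 : R) := by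
  rw [Polynomial.aeval_eq_sum_range, hdeg]
  simp [Finset.sum_range_succ, zsmul_eq_mul]
  ring

/-- An irreducible integer polynomial of degree 2 has no rational root. -/
lemma aux_no_rat_root (f : Polynomial ℤ) (hf : Irreducible f) (hdeg : f.natDegree = 2)
    (x : ℚ) : Polynomial.aeval x f ≠ 0 := by
  intro h
  have hprim : f.IsPrimitive := by
    rw [Polynomial.isPrimitive_iff_isUnit_of_C_dvd]
    intro r hr
    obtain ⟨g, hg⟩ := hr
    rcases hf.isUnit_or_isUnit hg with h1 | h2
    · exact Polynomial.isUnit_C.mp h1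
    · exfalso
      have hg0 : g.natDegree = 0 := Polynomial.natDegree_eq_zero_of_isUnit h2
      have : f.natDegree = 0 := by
        rw [hg]
        have := Polynomial.natDegree_mul_le (p := Polynomial.C r) (q := g)
        simpa [hg0] using this
      omega
  have hF : Irreducible (f.map (Int.castRingHom ℚ)) :=
    (Polynomial.IsPrimitive.Int.irreducible_iff_irreducible_map_cast hprim).mp hf
  have hdegF : (f.map (Int.castRingHom ℚ)).natDegree = 2 := by
    rw [Polynomial.natDegree_map_eq_of_injective (Int.cast_injective)]
    exact hdeg
  have hroot : (f.map (Int.castRingHom ℚ)).IsRoot x := by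
    rw [Polynomial.IsRoot, Polynomial.eval_map]
    rw [Polynomial.aeval_def] at h
    simpa using h
  obtain ⟨g, hg⟩ := (Polynomial.dvd_iff_isRoot).mpr hroot
  rcases hF.isUnit_or_isUnit hg with h1 | h2
  · exact Polynomial.not_isUnit_X_sub_C x h1
  · have hg0 : g.natDegree = 0 := Polynomial.natDegree_eq_zero_of_isUnit h2
    have hgne : g ≠ 0 := h2.ne_zero
    have : (f.map (Int.castRingHom ℚ)).natDegree = 1 := by
      rw [hg, Polynomial.natDegree_mul (Polynomial.X_sub_C_ne_zero x) hgne]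
      simp [hg0]
    omega

/-- For a nonzero integer, the product of its archimedean absolute value with
its `p`-adic norm is at least `1`. -/
lemma aux_padic_prod (p : ℕ) [Fact p.Prime] (N : ℤ) (hN : N ≠ 0) :
    1 ≤ |(N : ℝ)| * ‖(N : ℚ_[p])‖ := by
  have h0 : ((N : ℚ_[p])) ≠ 0 := Int.cast_ne_zero.mpr hN
  rw [Padic.norm_eq_zpow_neg_valuation h0, Padic.valuation_intCast]
  set v := padicValInt p N with hv
  have hdvd : (p : ℤ) ^ v ∣ N := padicValInt_dvd N
  have hle : (p : ℤ) ^ v ≤ |N| := Int.le_of_dvd (abs_pos.mpr hN) ((dvd_abs _ _).mpr hdvd)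
  have hppos : (0 : ℝ) < (p : ℝ) ^ v := by
    have : (0 : ℝ) < (p : ℝ) := by exact_mod_cast (Fact.out : p.Prime).pos
    positivity
  have hcast : ((p : ℝ)) ^ v ≤ |(N : ℝ)| := by
    rw [← Int.cast_abs]
    exact_mod_cast hle
  rw [zpow_neg, zpow_natCast, le_mul_inv_iff₀ hppos, one_mul]
  exact hcast

/-- Counterexamples to (EK+): if `f ∈ ℤ[X]` is irreducible of degree 2 with a real root `α`
and a `p`-adic root `β`, then `max(|q|,|r|)·|qα−r|·|qβ−r|_p` is bounded below by a positive
constant over all nonzero integers `q, r`. -/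
theorem stmt0 (p : ℕ) [Fact p.Prime] (f : Polynomial ℤ)
    (hf : Irreducible f) (hdeg : f.natDegree = 2)
    (α : ℝ) (hα : Polynomial.aeval α f = 0)
    (β : ℚ_[p]) (hβ : Polynomial.aeval β f = 0) :
    ∃ c : ℝ, 0 < c ∧ ∀ q r : ℤ, q ≠ 0 → r ≠ 0 →
      c ≤ max |(q : ℝ)| |(r : ℝ)| * |(q : ℝ) * α - (r : ℝ)| * ‖(q : ℚ_[p]) * β - (r : ℚ_[p])‖ := by
  set a : ℤ := f.coeff 2 with ha_def
  set b : ℤ := f.coeff 1 with hb_def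
  set c0 : ℤ := f.coeff 0 with hc0_def
  have ha : a ≠ 0 := by
    have : f.leadingCoeff ≠ 0 := Polynomial.leadingCoeff_ne_zero.mpr hf.ne_zero
    rwa [Polynomial.leadingCoeff, hdeg] at this
  have hαeq : (a : ℝ) * α ^ 2 + (b : ℝ) * α + (c0 : ℝ) = 0 := by
    rw [aux_eval_quad f hdeg α] at hα; exact hα
  have hβeq : (a : ℚ_[p]) * β ^ 2 + (b : ℚ_[p]) * β + (c0 : ℚ_[p]) = 0 := by
    rw [aux_eval_quad f hdeg β] at hβ; exact hβ
  set A : ℝ := |(a : ℝ)| * (1 + |α|) + |(b : ℝ)| with hA_def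
  set B : ℝ := ‖(a : ℚ_[p])‖ * (1 + ‖β‖) + ‖(b : ℚ_[p])‖ with hB_def
  have hApos : 0 < A := by
    have h1 : (0 : ℝ) < |(a : ℝ)| := abs_pos.mpr (by exact_mod_cast ha)
    have h2 : (0 : ℝ) < 1 + |α| := by positivity
    have := abs_nonneg ((b : ℝ))
    nlinarith
  have hBpos : 0 < B := by
    have h1 : (0 : ℝ) < ‖(a : ℚ_[p])‖ := norm_pos_iff.mpr (Int.cast_ne_zero.mpr ha)
    have h2 : (0 : ℝ) < 1 + ‖β‖ := by positivity
    have := norm_nonneg ((b : ℚ_[p]))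
    nlinarith
  refine ⟨(A * B)⁻¹, by positivity, ?_⟩
  intro q r hq hr
  set N : ℤ := a * r ^ 2 + b * q * r + c0 * q ^ 2 with hN_def
  -- N ≠ 0
  have hqQ : ((q : ℚ)) ≠ 0 := Int.cast_ne_zero.mpr hq
  have hNne : N ≠ 0 := by
    intro h0
    apply aux_no_rat_root f hf hdeg ((r : ℚ) / (q : ℚ))
    have hEv : Polynomial.aeval ((r : ℚ) / (q : ℚ)) f * (q : ℚ) ^ 2 = (N : ℚ) := by
      rw [aux_eval_quad f hdeg]
      push_cast [hN_def]
      field_simp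
      ring
    have : Polynomial.aeval ((r : ℚ) / (q : ℚ)) f * (q : ℚ) ^ 2 = 0 := by
      rw [hEv, h0]; norm_num
    rcases mul_eq_zero.mp this with h | h
    · exact h
    · exact absurd h (pow_ne_zero 2 hqQ)
  -- real factorization
  have hNr : (N : ℝ) = ((r : ℝ) - (q : ℝ) * α) *
      ((a : ℝ) * r + (a : ℝ) * (q : ℝ) * α + (b : ℝ) * (q : ℝ)) := by
    push_cast [hN_def]
    linear_combination (q : ℝ) ^ 2 * hαeq
  -- p-adic factorization
  have hNp : ((N : ℚ_[p])) = ((r : ℚ_[p]) - (q : ℚ_[p]) * β) *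
      ((a : ℚ_[p]) * r + (a : ℚ_[p]) * (q : ℚ_[p]) * β + (b : ℚ_[p]) * (q : ℚ_[p])) := by
    push_cast [hN_def]
    linear_combination (q : ℚ_[p]) ^ 2 * hβeq
  set M : ℝ := max |(q : ℝ)| |(r : ℝ)| with hM_def
  have hqM : |(q : ℝ)| ≤ M := le_max_left _ _
  have hrM : |(r : ℝ)| ≤ M := le_max_right _ _
  have hMpos : 0 < M := lt_of_lt_of_le (abs_pos.mpr (by exact_mod_cast hq)) hqM
  -- bound the real cofactor
  have hcof : |(a : ℝ) * r + (a : ℝ) * (q : ℝ) * α + (b : ℝ) * (q : ℝ)| ≤ A * M := by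
    have h1 : |(a : ℝ) * r + (a : ℝ) * (q : ℝ) * α + (b : ℝ) * (q : ℝ)| ≤
        |(a : ℝ)| * |(r : ℝ)| + |(a : ℝ)| * |(q : ℝ)| * |α| + |(b : ℝ)| * |(q : ℝ)| := by
      calc |(a : ℝ) * r + (a : ℝ) * (q : ℝ) * α + (b : ℝ) * (q : ℝ)|
          ≤ |(a : ℝ) * r + (a : ℝ) * (q : ℝ) * α| + |(b : ℝ) * (q : ℝ)| := abs_add_le _ _
        _ ≤ |(a : ℝ) * r| + |(a : ℝ) * (q : ℝ) * α| + |(b : ℝ) * (q : ℝ)| := by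
            linarith [abs_add_le ((a : ℝ) * r) ((a : ℝ) * (q : ℝ) * α)]
        _ = |(a : ℝ)| * |(r : ℝ)| + |(a : ℝ)| * |(q : ℝ)| * |α| + |(b : ℝ)| * |(q : ℝ)| := by
            rw [abs_mul, abs_mul, abs_mul, abs_mul]
    have ha0 : (0 : ℝ) ≤ |(a : ℝ)| := abs_nonneg _
    have hb0 : (0 : ℝ) ≤ |(b : ℝ)| := abs_nonneg _
    have hα0 : (0 : ℝ) ≤ |α| := abs_nonneg _
    have hq0 : (0 : ℝ) ≤ |(q : ℝ)| := abs_nonneg _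
    have hr0 : (0 : ℝ) ≤ |(r : ℝ)| := abs_nonneg _
    nlinarith [mul_le_mul_of_nonneg_left hrM ha0, mul_le_mul_of_nonneg_left hqM ha0,
      mul_le_mul_of_nonneg_left hqM hb0,
      mul_le_mul_of_nonneg_left (mul_le_mul_of_nonneg_left hqM ha0) hα0]
  -- bound the p-adic cofactor
  have hq1 : ‖((q : ℚ_[p]))‖ ≤ 1 := by exact_mod_cast Padic.norm_int_le_one q
  have hr1 : ‖((r : ℚ_[p]))‖ ≤ 1 := by exact_mod_cast Padic.norm_int_le_one r
  have hcofp : ‖(a : ℚ_[p]) * r + (a : ℚ_[p]) * (q : ℚ_[p]) * β + (b : ℚ_[p]) * (q : ℚ_[p])‖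
      ≤ B := by
    have h1 : ‖(a : ℚ_[p]) * r + (a : ℚ_[p]) * (q : ℚ_[p]) * β + (b : ℚ_[p]) * (q : ℚ_[p])‖ ≤
        ‖(a : ℚ_[p])‖ * ‖(r : ℚ_[p])‖ + ‖(a : ℚ_[p])‖ * ‖(q : ℚ_[p])‖ * ‖β‖ +
          ‖(b : ℚ_[p])‖ * ‖(q : ℚ_[p])‖ := by
      calc ‖(a : ℚ_[p]) * r + (a : ℚ_[p]) * (q : ℚ_[p]) * β + (b : ℚ_[p]) * (q : ℚ_[p])‖
          ≤ ‖(a : ℚ_[p]) * r + (a : ℚ_[p]) * (q : ℚ_[p]) * β‖ +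
            ‖(b : ℚ_[p]) * (q : ℚ_[p])‖ := norm_add_le _ _
        _ ≤ ‖(a : ℚ_[p]) * r‖ + ‖(a : ℚ_[p]) * (q : ℚ_[p]) * β‖ +
            ‖(b : ℚ_[p]) * (q : ℚ_[p])‖ := by
            linarith [norm_add_le ((a : ℚ_[p]) * r) ((a : ℚ_[p]) * (q : ℚ_[p]) * β)]
        _ = ‖(a : ℚ_[p])‖ * ‖(r : ℚ_[p])‖ + ‖(a : ℚ_[p])‖ * ‖(q : ℚ_[p])‖ * ‖β‖ +
            ‖(b : ℚ_[p])‖ * ‖(q : ℚ_[p])‖ := by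
            rw [norm_mul, norm_mul, norm_mul, norm_mul]
    have ha0 : (0 : ℝ) ≤ ‖(a : ℚ_[p])‖ := norm_nonneg _
    have hb0 : (0 : ℝ) ≤ ‖(b : ℚ_[p])‖ := norm_nonneg _
    have hβ0 : (0 : ℝ) ≤ ‖β‖ := norm_nonneg _
    nlinarith [mul_le_mul_of_nonneg_left hr1 ha0, mul_le_mul_of_nonneg_left hq1 ha0,
      mul_le_mul_of_nonneg_left hq1 hb0,
      mul_le_mul_of_nonneg_left (mul_le_mul_of_nonneg_left hq1 ha0) hβ0]
  -- put everything together
  set u : ℝ := |(q : ℝ) * α - (r : ℝ)| with hu_def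
  set w : ℝ := ‖(q : ℚ_[p]) * β - (r : ℚ_[p])‖ with hw_def
  have hu0 : 0 ≤ u := abs_nonneg _
  have hw0 : 0 ≤ w := norm_nonneg _
  have hNabs : |(N : ℝ)| ≤ u * (A * M) := by
    rw [hNr, abs_mul, abs_sub_comm]
    exact mul_le_mul_of_nonneg_left hcof hu0
  have hNnorm : ‖((N : ℚ_[p]))‖ ≤ w * B := by
    have : ‖((N : ℚ_[p]))‖ = ‖(r : ℚ_[p]) - (q : ℚ_[p]) * β‖ *
        ‖(a : ℚ_[p]) * r + (a : ℚ_[p]) * (q : ℚ_[p]) * β + (b : ℚ_[p]) * (q : ℚ_[p])‖ := by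
      rw [hNp, norm_mul]
    rw [this, norm_sub_rev]
    exact mul_le_mul_of_nonneg_left hcofp hw0
  have hkey : 1 ≤ (u * (A * M)) * (w * B) := by
    calc (1 : ℝ) ≤ |(N : ℝ)| * ‖((N : ℚ_[p]))‖ := aux_padic_prod p N hNne
      _ ≤ (u * (A * M)) * (w * B) := by
          apply mul_le_mul hNabs hNnorm (norm_nonneg _)
          positivity
  have hABpos : 0 < A * B := mul_pos hApos hBpos
  rw [inv_le_iff_one_le_mul₀ hABpos]
  calc (1 : ℝ) ≤ (u * (A * M)) * (w * B) := hkey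
    _ = M * u * w * (A * B) := by ring
end

section
/- Let α be a real quadratic number with minimal polynomial f ∈ ℤ[X], and let β ∈ ℚ_p with f(β) ≠ 0. Then the pair (α, β) satisfies (EK+): inf over nonzero integers q, r of max(|q|,|r|)·|qα−r|·|qβ−r|_p = 0. -/
/-!
Write `f = aX² + bX + c` and `D = b² - 4ac`. An element `U = x + y√D` of `ℤ[√D]` acts on
integer pairs `(q, r)` (`orbit`) so that `qθ - r` is multiplied by `x + y(2aθ + b)` for each
root `θ` of `f`. Take `U` of norm one with `|x + y(2aα + b)| < 1` and put
`(Qₙ, Rₙ) = Uⁿ • (q₀, r₀)`. Then `Qₙα - Rₙ` decays like `|U|ⁿ` while `(Qₙ, Rₙ)` grows like the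
conjugate, `|U|⁻ⁿ`, so `max(|Qₙ|, |Rₙ|) |Qₙα - Rₙ|` stays bounded; and `Qₙ, Rₙ ≠ 0` for large
`n`, since `Qₙα - Rₙ → 0` while the conjugate form `Qₙα' - Rₙ` never vanishes.

On the `p`-adic side `Qₙβ - Rₙ = ℓ(Uⁿ)` for the additive map `ℓ(g) = Re g · u + Im g · w`, where
`u = q₀β - r₀` and `w = ℓ(√D)`. Some power of `U` is `1 + p^e ν` with `p ∤ Im ν`. Because
`f(β) ≠ 0`, `(q₀, r₀)` can be chosen with `u` tiny compared to `w ≈ -2q₀ f(β)`. To first order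
`ℓ((1 + p^e ν)ⁿ) ≈ u + n p^e ℓ(ν)` with `|ℓ(ν)| = |w|`, and a Newton iteration, correcting `n` at
step `j` by a multiple of `p^j`, drives it to `0`.
-/

open Polynomial Filter Topology

namespace PadicLittlewood

theorem irrational_of_irreducible {f : ℤ[X]} (hf : Irreducible f) (hdeg : 1 < f.natDegree)
    {α : ℝ} (hα : aeval α f = 0) : Irrational α := by
  rintro ⟨q, rfl⟩
  have hirr : Irreducible (f.map (Int.castRingHom ℚ)) :=
    (IsPrimitive.Int.irreducible_iff_irreducible_map_cast (hf.isPrimitive (by omega))).mp hf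
  refine hirr.not_isRoot_of_natDegree_ne_one ?_ (x := q) ?_
  · rw [natDegree_map_eq_of_injective (RingHom.injective_int _)]
    omega
  · rw [IsRoot, eval_map, ← algebraMap_int_eq, ← aeval_def]
    apply (algebraMap ℚ ℝ).injective
    rw [map_zero, ← aeval_algebraMap_apply]
    simpa using hα

theorem aeval_eq_of_natDegree_eq_two {R : Type*} [CommRing R] {f : ℤ[X]} (hdeg : f.natDegree = 2)
    (x : R) : aeval x f = f.coeff 2 * x ^ 2 + f.coeff 1 * x + f.coeff 0 := by
  rw [aeval_eq_sum_range, hdeg, Finset.sum_range_succ, Finset.sum_range_succ,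
    Finset.sum_range_one]
  simp only [zsmul_eq_mul]
  ring

def form {R : Type*} [Ring R] (θ : R) (v : ℤ × ℤ) : R := v.1 * θ - v.2

-- For a root `θ` of `aX² + bX + c`, `twist` is multiplication of `qθ - r` by `2aθ + b`.
def twist (a b c : ℤ) (v : ℤ × ℤ) : ℤ × ℤ := (-b * v.1 - 2 * a * v.2, 2 * c * v.1 + b * v.2)

def orbit (a b c : ℤ) {d : ℤ} (g : ℤ√d) (v : ℤ × ℤ) : ℤ × ℤ := g.re • v + g.im • twist a b c v

section Forms

variable {R : Type*} [CommRing R] (a b c : ℤ)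

theorem form_twist (θ : R) (v : ℤ × ℤ) :
    form θ (twist a b c v) = (2 * a * θ + b) * form θ v - 2 * v.1 * (a * θ ^ 2 + b * θ + c) := by
  simp only [form, twist]
  push_cast
  ring

theorem form_orbit {d : ℤ} (θ : R) (g : ℤ√d) (v : ℤ × ℤ) :
    form θ (orbit a b c g v) = g.re * form θ v + g.im * form θ (twist a b c v) := by
  simp only [form, orbit, Prod.fst_add, Prod.snd_add, Prod.smul_fst, Prod.smul_snd, smul_eq_mul]
  push_cast
  ring

variable {a b c}

theorem form_orbit_of_root {d : ℤ} {θ : R} (hθ : a * θ ^ 2 + b * θ + c = 0) (g : ℤ√d)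
    (v : ℤ × ℤ) : form θ (orbit a b c g v) = (g.re + g.im * (2 * a * θ + b)) * form θ v := by
  rw [form_orbit, form_twist, hθ]
  ring

theorem two_mul_add_mul_self_eq_of_root {θ : R} (hθ : a * θ ^ 2 + b * θ + c = 0) :
    (2 * a * θ + b) * (2 * a * θ + b) = ((b ^ 2 - 4 * a * c : ℤ) : R) := by
  push_cast
  linear_combination 4 * a * hθ

end Forms

section Units

variable {d : ℤ}

theorem re_add_im_mul_pow {R : Type*} [CommRing R] {δ : R} (hδ : δ * δ = d) (U : ℤ√d)
    (n : ℕ) : ((U ^ n).re : R) + (U ^ n).im * δ = (U.re + U.im * δ) ^ n := by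
  simpa only [Zsqrtd.lift_apply_apply] using map_pow (Zsqrtd.lift ⟨δ, hδ⟩) U n

theorem pow_ne_one_of_abs_lt_one {δ : ℝ} (hδ : δ * δ = d) {U : ℤ√d} (hU : |U.re + U.im * δ| < 1)
    {n : ℕ} (hn : 0 < n) : U ^ n ≠ 1 := fun h ↦ by
  have h1 : ((U.re : ℝ) + U.im * δ) ^ n = 1 := by rw [← re_add_im_mul_pow hδ, h]; simp
  have := pow_lt_one₀ (abs_nonneg _) hU hn.ne'
  rw [← abs_pow, h1, abs_one] at this
  exact lt_irrefl _ this

theorem exists_pow_sub_one_dvd {U : ℤ√d} (hU : U.norm = 1) {N : ℤ} (hN : N ≠ 0) :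
    ∃ n, 0 < n ∧ (N : ℤ√d) ∣ U ^ n - 1 := by
  have : NeZero N.natAbs := ⟨Int.natAbs_ne_zero.mpr hN⟩
  obtain ⟨m, n, hmn, hcongr⟩ := Set.finite_univ.exists_lt_map_eq_of_forall_mem
    (f := fun k : ℕ ↦ (((U ^ k).re : ZMod N.natAbs), ((U ^ k).im : ZMod N.natAbs)))
    (fun _ ↦ Set.mem_univ _)
  simp only [Prod.mk.injEq, ZMod.intCast_eq_intCast_iff_dvd_sub, Int.natCast_natAbs,
    abs_dvd] at hcongr
  have hdiff : (N : ℤ√d) ∣ U ^ n - U ^ m := by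
    rw [Zsqrtd.intCast_dvd]
    exact ⟨by simpa using hcongr.1, by simpa using hcongr.2⟩
  obtain ⟨k, rfl⟩ : ∃ k, n = m + k := ⟨n - m, by omega⟩
  refine ⟨k, by omega, ?_⟩
  have hinv : star U ^ m * U ^ m = 1 := by
    rw [← mul_pow, mul_comm, ← Zsqrtd.norm_eq_mul_conj, hU, Int.cast_one, one_pow]
  have : U ^ k - 1 = star U ^ m * (U ^ (m + k) - U ^ m) := by
    rw [pow_add]
    linear_combination (1 - U ^ k) * hinv
  rw [this]
  exact hdiff.mul_left _

theorem dvd_of_sq_dvd_two_mul {p : ℕ} (hp : p.Prime) {x : ℤ} (h : (p : ℤ) ^ 2 ∣ 2 * x) :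
    (p : ℤ) ∣ x := by
  rcases (Nat.prime_iff_prime_int.mp hp).dvd_or_dvd ((dvd_pow_self _ two_ne_zero).trans h)
    with h2 | hx
  · obtain rfl : p = 2 := (Nat.prime_dvd_prime_iff_eq hp Nat.prime_two).mp (by exact_mod_cast h2)
    norm_num at h
    omega
  · exact hx

theorem exists_not_pow_dvd {p : ℕ} (hp : 1 < p) {x : ℤ√d} (hx : x ≠ 0) :
    ∃ k, ¬ (p : ℤ√d) ^ k ∣ x := by
  by_contra! h
  have hzero (z : ℤ) (hz : ∀ k, (p : ℤ) ^ k ∣ z) : z = 0 :=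
    Int.eq_zero_of_dvd_of_natAbs_lt_natAbs (hz z.natAbs) (by simpa using Nat.lt_pow_self hp)
  have hdvd k := (Zsqrtd.intCast_dvd ((p : ℤ) ^ k) x).mp (by simpa using h k)
  exact hx (Zsqrtd.ext (hzero _ fun k ↦ (hdvd k).1) (hzero _ fun k ↦ (hdvd k).2))

-- Expanding the norm gives `2 ν.re = -p ^ (e + 2) * ν.norm`.
theorem dvd_re_of_norm_one_add_pow_mul_eq_one {p : ℕ} (hp : p.Prime) {e : ℕ} {ν : ℤ√d}
    (h : (1 + (p : ℤ√d) ^ (e + 2) * ν).norm = 1) : (p : ℤ) ∣ ν.re := by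
  have hcast : (p : ℤ√d) ^ (e + 2) = ((p ^ (e + 2) : ℤ) : ℤ√d) := by push_cast; rfl
  rw [hcast, Zsqrtd.norm_def] at h
  simp only [Zsqrtd.re_add, Zsqrtd.re_one, Zsqrtd.re_smul, Zsqrtd.im_add, Zsqrtd.im_one,
    Zsqrtd.im_smul, zero_add] at h
  have hP : (p : ℤ) ^ (e + 2) ≠ 0 := pow_ne_zero _ (by exact_mod_cast hp.ne_zero)
  have h2re : 2 * ν.re = p ^ 2 * (p ^ e * (d * ν.im ^ 2 - ν.re ^ 2)) := by
    apply mul_left_cancel₀ hP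
    linear_combination h
  exact dvd_of_sq_dvd_two_mul hp (h2re ▸ dvd_mul_right _ _)

theorem exists_eq_one_add_pow_mul {p : ℕ} (hp : p.Prime) {V : ℤ√d} (hV : V.norm = 1)
    (hV1 : V ≠ 1) (h2 : (p : ℤ√d) ^ 2 ∣ V - 1) :
    ∃ e ν, V = 1 + (p : ℤ√d) ^ (e + 2) * ν ∧ ¬ (p : ℤ) ∣ ν.im := by
  classical
  have hfin := exists_not_pow_dvd hp.one_lt (sub_ne_zero.mpr hV1)
  obtain ⟨e, he⟩ : ∃ e, Nat.find hfin = e + 3 := by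
    refine ⟨Nat.find hfin - 3, ?_⟩
    by_contra hlt
    exact Nat.find_spec hfin ((pow_dvd_pow _ (by omega)).trans h2)
  obtain ⟨ν, hν⟩ := not_not.mp (Nat.find_min hfin (show e + 2 < Nat.find hfin by omega))
  rw [sub_eq_iff_eq_add'] at hν
  refine ⟨e, ν, hν, fun hpν ↦ Nat.find_spec hfin ?_⟩
  -- otherwise `p ∣ ν`, contradicting the maximality of `e + 2`
  have hpν' : ((p : ℤ) : ℤ√d) ∣ ν :=
    (Zsqrtd.intCast_dvd _ _).mpr ⟨dvd_re_of_norm_one_add_pow_mul_eq_one hp (hν ▸ hV), hpν⟩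
  rw [he, hν, add_sub_cancel_left, pow_succ]
  exact mul_dvd_mul_left _ (by simpa using hpν')

theorem exists_norm_eq_one_abs_lt_one {δ : ℝ} (hδ : Irrational δ) (hδd : δ * δ = d) :
    ∃ U : ℤ√d, U.norm = 1 ∧ |U.re + U.im * δ| < 1 := by
  have hd : 0 < d := by
    have : (0 : ℝ) < d := hδd ▸ mul_self_pos.mpr hδ.ne_zero
    exact_mod_cast this
  have hsq : ¬ IsSquare d := by
    rintro ⟨k, rfl⟩
    push_cast at hδd
    have : (δ - k) * (δ + k) = 0 := by linear_combination hδd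
    rcases mul_eq_zero.mp this with h | h
    · exact hδ.ne_int k (by linarith)
    · exact hδ.ne_int (-k) (by push_cast; linarith)
  obtain ⟨x, y, hxy, hy⟩ := Pell.exists_of_not_isSquare hd hsq
  set φ : ℤ√d →+* ℝ := Zsqrtd.lift ⟨δ, hδd⟩
  have hφ (U : ℤ√d) : φ U = U.re + U.im * δ := Zsqrtd.lift_apply_apply _ _
  set U : ℤ√d := ⟨x, y⟩
  have hU : U.norm = 1 := by rw [Zsqrtd.norm_def]; linear_combination hxy
  have hprod : |φ U| * |φ (star U)| = 1 := by
    rw [← abs_mul, ← map_mul, ← Zsqrtd.norm_eq_mul_conj, hU]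
    simp
  have hne : |φ U| ≠ 1 := by
    have hirr : Irrational (x + y * δ) := (hδ.intCast_mul hy).intCast_add x
    rw [hφ, Ne, abs_eq zero_le_one]
    rintro (h | h)
    · exact hirr.ne_int 1 (by simpa [U] using h)
    · exact hirr.ne_int (-1) (by simpa [U] using h)
  rcases hne.lt_or_gt with hlt | hgt
  · exact ⟨U, hU, hφ U ▸ hlt⟩
  · refine ⟨star U, by rw [Zsqrtd.norm_conj, hU], ?_⟩
    rw [← hφ]
    nlinarith [abs_nonneg (φ (star U))]

end Units

section RealOrbit

theorem max_abs_mul_abs_sub_le (Q R α α' : ℝ) :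
    max |Q| |R| * |α - α'| ≤ (1 + |α| + |α'|) * (|Q * α - R| + |Q * α' - R|) := by
  have hQ : |Q| * |α - α'| ≤ |Q * α - R| + |Q * α' - R| := by
    rw [← abs_mul, show Q * (α - α') = (Q * α - R) - (Q * α' - R) by ring]
    exact abs_sub _ _
  have hR : |R| * |α - α'| ≤ |α'| * |Q * α - R| + |α| * |Q * α' - R| := by
    rw [← abs_mul, ← abs_mul, ← abs_mul,
      show R * (α - α') = α' * (Q * α - R) - α * (Q * α' - R) by ring]
    exact abs_sub _ _
  rw [max_mul_of_nonneg _ _ (abs_nonneg _)]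
  refine max_le ?_ ?_ <;>
    nlinarith [abs_nonneg α, abs_nonneg α', abs_nonneg (Q * α - R), abs_nonneg (Q * α' - R)]

variable {α α' l l' σ σ' : ℝ} {Q R : ℕ → ℤ}
  (hσ : ∀ n, Q n * α - R n = l ^ n * σ) (hσ' : ∀ n, Q n * α' - R n = l' ^ n * σ')
include hσ hσ'

theorem exists_forall_max_abs_mul_abs_le (hαα' : α ≠ α') (hl : |l| ≤ 1) (hll' : l * l' = 1) :
    ∃ C, ∀ n, max |(Q n : ℝ)| |(R n : ℝ)| * |Q n * α - R n| ≤ C := by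
  have hA : 0 < |α - α'| := abs_pos.mpr (sub_ne_zero.mpr hαα')
  set K := (1 + |α| + |α'|) / |α - α'|
  refine ⟨K * (σ ^ 2 + |σ * σ'|), fun n ↦ ?_⟩
  have hmax : max |(Q n : ℝ)| |(R n : ℝ)| ≤ K * (|Q n * α - R n| + |Q n * α' - R n|) := by
    rw [div_mul_eq_mul_div, le_div_iff₀ hA]
    exact max_abs_mul_abs_sub_le _ _ _ _
  have hln : |l ^ n| ≤ 1 := by rw [abs_pow]; exact pow_le_one₀ (abs_nonneg _) hl
  have hprod : |l ^ n| * |l' ^ n| = 1 := by rw [← abs_mul, ← mul_pow, hll', one_pow, abs_one]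
  calc max |(Q n : ℝ)| |(R n : ℝ)| * |Q n * α - R n|
      ≤ K * (|Q n * α - R n| + |Q n * α' - R n|) * |Q n * α - R n| := by gcongr
    _ = K * (|l ^ n| ^ 2 * σ ^ 2 + |l ^ n| * |l' ^ n| * |σ * σ'|) := by
      rw [hσ, hσ', abs_mul, abs_mul, abs_mul, ← sq_abs σ]; ring
    _ ≤ K * (σ ^ 2 + |σ * σ'|) := by
      rw [hprod, one_mul]
      gcongr
      exact mul_le_of_le_one_left (sq_nonneg σ) (pow_le_one₀ (abs_nonneg _) hln)

theorem eventually_ne_zero_and_ne_zero (hα : α ≠ 0) (hl : |l| < 1) (hl' : l' ≠ 0)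
    (hσ'0 : σ' ≠ 0) : ∀ᶠ n in atTop, Q n ≠ 0 ∧ R n ≠ 0 := by
  have hlim : Tendsto (fun n ↦ |(Q n : ℝ) * α - R n|) atTop (𝓝 0) := by
    simpa [hσ] using ((tendsto_pow_atTop_nhds_zero_of_abs_lt_one hl).mul_const σ).abs
  filter_upwards [hlim.eventually (gt_mem_nhds (lt_min one_pos (abs_pos.mpr hα)))] with n hn
  rw [lt_min_iff] at hn
  have hQR : ¬ (Q n = 0 ∧ R n = 0) := fun ⟨hQ, hR⟩ ↦ by
    simpa [hQ, hR, hl', hσ'0] using hσ' n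
  refine ⟨fun hQ ↦ hQR ⟨hQ, ?_⟩, fun hR ↦ hQR ⟨?_, hR⟩⟩
  · have : |(R n : ℝ)| < 1 := by simpa [hQ] using hn.1
    exact Int.abs_lt_one_iff.mp (by exact_mod_cast this)
  · have : |(Q n : ℝ)| * |α| < 1 * |α| := by simpa [hR, abs_mul] using hn.2
    exact Int.abs_lt_one_iff.mp (by exact_mod_cast lt_of_mul_lt_mul_right this (abs_nonneg α))

end RealOrbit

theorem exists_bound_and_eventually_orbit_ne_zero {a b c : ℤ} (ha : a ≠ 0) {α : ℝ}
    (hα : Irrational α) (hroot : a * α ^ 2 + b * α + c = 0) {U : ℤ√(b ^ 2 - 4 * a * c)}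
    (hU : U.norm = 1)
    (hlt : |U.re + U.im * (2 * a * α + b)| < 1) {v : ℤ × ℤ} (hv : v.1 ≠ 0) :
    (∃ C, ∀ n, max |((orbit a b c (U ^ n) v).1 : ℝ)| |((orbit a b c (U ^ n) v).2 : ℝ)| *
        |form α (orbit a b c (U ^ n) v)| ≤ C) ∧
      ∀ᶠ n in atTop, (orbit a b c (U ^ n) v).1 ≠ 0 ∧ (orbit a b c (U ^ n) v).2 ≠ 0 := by
  set δ : ℝ := 2 * a * α + b
  have hδ : δ * δ = ((b ^ 2 - 4 * a * c : ℤ) : ℝ) := two_mul_add_mul_self_eq_of_root hroot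
  have hδ' : -δ * -δ = ((b ^ 2 - 4 * a * c : ℤ) : ℝ) := by rw [neg_mul_neg, hδ]
  have hδirr : Irrational δ := by
    simpa [δ] using (hα.intCast_mul (mul_ne_zero two_ne_zero ha)).add_intCast b
  set α' : ℝ := -α - b / a
  have hα'δ : 2 * a * α' + b = -δ := by simp only [α', δ]; field_simp; ring
  have hroot' : a * α' ^ 2 + b * α' + c = 0 := by
    simp only [α']; field_simp; linear_combination a * hroot
  have hσ' : ∀ n, ((orbit a b c (U ^ n) v).1 : ℝ) * α' - (orbit a b c (U ^ n) v).2 =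
      (U.re + U.im * -δ) ^ n * form α' v := fun n ↦ by
    rw [← re_add_im_mul_pow hδ', ← hα'δ]; exact form_orbit_of_root hroot' _ _
  have hσ : ∀ n, ((orbit a b c (U ^ n) v).1 : ℝ) * α - (orbit a b c (U ^ n) v).2 =
      (U.re + U.im * δ) ^ n * form α v := fun n ↦ by
    rw [← re_add_im_mul_pow hδ]; exact form_orbit_of_root hroot _ _
  have hll' : ((U.re : ℝ) + U.im * δ) * (U.re + U.im * -δ) = 1 := by
    have : ((U.norm : ℤ) : ℝ) = 1 := by rw [hU, Int.cast_one]
    rw [Zsqrtd.norm_def] at this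
    push_cast at this hδ
    linear_combination this - (U.im : ℝ) ^ 2 * hδ
  have hαα' : α ≠ α' := fun h ↦ hδirr.ne_zero (by rw [← h] at hα'δ; linarith)
  have hσ'0 : form α' v ≠ 0 := by
    have hα' : Irrational α' := by simpa [α'] using hα.neg.sub_ratCast (b / a : ℚ)
    exact sub_ne_zero.mpr ((hα'.intCast_mul hv).ne_int v.2)
  exact ⟨exists_forall_max_abs_mul_abs_le hσ hσ' hαα' hlt.le hll',
    eventually_ne_zero_and_ne_zero hσ hσ' hα.ne_zero hlt (right_ne_zero_of_mul_eq_one hll') hσ'0⟩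

section Approximation

variable {p : ℕ} [Fact p.Prime]

theorem exists_nat_norm_sub_lt {x : ℚ_[p]} (hx : ‖x‖ ≤ 1) {ε : ℝ} (hε : 0 < ε) :
    ∃ m : ℕ, ‖(m : ℚ_[p]) - x‖ < ε := by
  obtain ⟨m, hm⟩ := PadicInt.denseRange_natCast.exists_dist_lt (⟨x, hx⟩ : ℤ_[p]) hε
  refine ⟨m, ?_⟩
  change dist x ((m : ℤ_[p]) : ℚ_[p]) < ε at hm
  rwa [PadicInt.coe_natCast, dist_eq_norm, norm_sub_rev] at hm

theorem exists_pos_nat_norm_sub_le {z : ℚ_[p]} (hz : ‖z‖ ≤ 1) :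
    ∃ k : ℕ, 0 < k ∧ ‖(k : ℚ_[p]) - z‖ ≤ (p : ℝ)⁻¹ := by
  obtain ⟨m, hm⟩ := exists_nat_norm_sub_lt hz one_pos
  have hm' : ‖(m : ℚ_[p]) - z‖ ≤ (p : ℝ)⁻¹ := by
    rw [← zpow_neg_one, Padic.norm_le_pow_iff_norm_lt_pow_add_one]
    simpa using hm
  refine ⟨m + p, Nat.add_pos_right _ (Fact.out : p.Prime).pos, ?_⟩
  calc ‖((m + p : ℕ) : ℚ_[p]) - z‖ = ‖((m : ℚ_[p]) - z) + p‖ := by push_cast; ring_nf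
    _ ≤ max ‖(m : ℚ_[p]) - z‖ ‖(p : ℚ_[p])‖ := Padic.nonarchimedean _ _
    _ ≤ (p : ℝ)⁻¹ := max_le hm' Padic.norm_p.le

end Approximation

section Newton

variable {p : ℕ} [Fact p.Prime] {R : Type*} [CommRing R] (ℓ : R →+ ℚ_[p]) {c : ℝ}

theorem apply_natCast_mul (n : ℕ) (x : R) : ℓ (n * x) = n * ℓ x := by
  rw [← nsmul_eq_mul, map_nsmul, nsmul_eq_mul]

theorem norm_apply_le_of_pow_dvd (hℓ : ∀ x, ‖ℓ x‖ ≤ c) {k : ℕ} {x : R} (hx : (p : R) ^ k ∣ x) :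
    ‖ℓ x‖ ≤ ((p : ℝ) ^ k)⁻¹ * c := by
  obtain ⟨y, rfl⟩ := hx
  rw [← Nat.cast_pow, apply_natCast_mul, norm_mul, Nat.cast_pow, Padic.norm_p_pow, zpow_neg,
    zpow_natCast]
  exact mul_le_mul_of_nonneg_left (hℓ y) (by positivity)

omit [Fact p.Prime] in
theorem exists_one_add_pow_mul_pow_prime_pow (ν : R) (e j : ℕ) :
    ∃ ν', (1 + (p : R) ^ (e + 1) * ν) ^ p ^ j = 1 + (p : R) ^ (e + 1 + j) * ν' ∧
      (p : R) ^ e ∣ ν' - ν := by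
  induction j with
  | zero => exact ⟨ν, by simp, by simp⟩
  | succ j ih =>
    obtain ⟨ν', hν', hdvd⟩ := ih
    obtain ⟨ρ, hρ⟩ := sq_dvd_add_pow_sub_sub ((p : R) ^ (e + 1 + j) * ν') 1 p
    refine ⟨ν' + (p : R) ^ (e + j) * (ν' ^ 2 * ρ), ?_, ?_⟩
    · rw [pow_succ p j, pow_mul, hν']
      simp only [one_pow] at hρ
      linear_combination hρ
    · rw [add_sub_right_comm]
      exact dvd_add hdvd (dvd_mul_of_dvd_left (pow_dvd_pow _ (Nat.le_add_right e j)) _)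

variable (hℓ : ∀ x, ‖ℓ x‖ ≤ c) {ν : R} {e : ℕ} (hν : c * ((p : ℝ) ^ e)⁻¹ < ‖ℓ ν‖)
include hℓ hν

theorem norm_apply_mul_pow_eq {ν' : R} (hν' : (p : R) ^ e ∣ ν' - ν) (n : ℕ) :
    ‖ℓ (ν' * (1 + (p : R) ^ (e + 1) * ν) ^ n)‖ = ‖ℓ ν‖ := by
  set V := 1 + (p : R) ^ (e + 1) * ν
  refine Padic.norm_eq_of_norm_sub_lt_right ?_
  rw [← map_sub]
  refine (norm_apply_le_of_pow_dvd ℓ hℓ ?_).trans_lt (by rwa [mul_comm])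
  have hVn : (p : R) ^ e ∣ V ^ n - 1 :=
    ((pow_dvd_pow _ e.le_succ).mul_right ν).trans (by simpa [V] using sub_one_dvd_pow_sub_one V n)
  rw [show ν' * V ^ n - ν = (ν' - ν) * V ^ n + ν * (V ^ n - 1) by ring]
  exact dvd_add (hν'.mul_right _) (hVn.mul_left _)

theorem norm_apply_pow_two_mul_le {E : ℕ} (hE : e + 1 ≤ E) (x : R) :
    ‖ℓ ((p : R) ^ (2 * E) * x)‖ ≤ ((p : ℝ) ^ (E + 1))⁻¹ * ‖ℓ ν‖ := by
  have hp : (1 : ℝ) ≤ p := by exact_mod_cast (Fact.out : p.Prime).one_lt.le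
  refine (norm_apply_le_of_pow_dvd ℓ hℓ (dvd_mul_right _ _)).trans ?_
  have : ((p : ℝ) ^ (2 * E))⁻¹ * c = ((p : ℝ) ^ (E + 1))⁻¹ * (c * ((p : ℝ) ^ (E - 1))⁻¹) := by
    rw [show 2 * E = (E + 1) + (E - 1) by omega, pow_add, mul_inv]; ring
  rw [this]
  gcongr
  refine le_trans ?_ hν.le
  exact mul_le_mul_of_nonneg_left (inv_anti₀ (by positivity) (pow_le_pow_right₀ hp (by omega)))
    ((norm_nonneg _).trans (hℓ 0))

theorem exists_norm_apply_pow_add_le {n j : ℕ}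
    (hn : ‖ℓ ((1 + (p : R) ^ (e + 1) * ν) ^ n)‖ ≤ ((p : ℝ) ^ (e + 1 + j))⁻¹ * ‖ℓ ν‖) :
    ∃ k, 0 < k ∧ ‖ℓ ((1 + (p : R) ^ (e + 1) * ν) ^ (n + p ^ j * k))‖ ≤
      ((p : ℝ) ^ (e + 1 + j + 1))⁻¹ * ‖ℓ ν‖ := by
  set V := 1 + (p : R) ^ (e + 1) * ν
  set E := e + 1 + j
  have hp : (0 : ℝ) < p := by exact_mod_cast (Fact.out : p.Prime).pos
  have hγ : 0 < ‖ℓ ν‖ :=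
    lt_of_le_of_lt (mul_nonneg ((norm_nonneg _).trans (hℓ 0)) (by positivity)) hν
  obtain ⟨ν', hV, hν'⟩ := exists_one_add_pow_mul_pow_prime_pow (p := p) ν e j
  -- `p ^ E * G` is the derivative of `k ↦ ℓ (V ^ (n + p ^ j * k))` at `k = 0`
  set G := ℓ (ν' * V ^ n)
  have hG : ‖G‖ = ‖ℓ ν‖ := norm_apply_mul_pow_eq ℓ hℓ hν hν' n
  have hPE : ‖(p : ℚ_[p]) ^ E‖ = ((p : ℝ) ^ E)⁻¹ := by
    rw [Padic.norm_p_pow, zpow_neg, zpow_natCast]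
  have hPG : (p : ℚ_[p]) ^ E * G ≠ 0 := by
    rw [← norm_ne_zero_iff, norm_mul, hPE, hG]; positivity
  set z := -ℓ (V ^ n) / ((p : ℚ_[p]) ^ E * G)
  have hz : ‖z‖ ≤ 1 := by
    rw [norm_div, norm_neg, norm_mul, hPE, hG]
    exact div_le_one_of_le₀ hn (by positivity)
  obtain ⟨k, hk, hkz⟩ := exists_pos_nat_norm_sub_le hz
  refine ⟨k, hk, ?_⟩
  obtain ⟨ρ, hρ⟩ := sq_dvd_add_pow_sub_sub ((p : R) ^ E * ν') 1 k
  simp only [one_pow] at hρ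
  have hsplit : ℓ (V ^ (n + p ^ j * k)) =
      (p : ℚ_[p]) ^ E * G * (k - z) + ℓ ((p : R) ^ (2 * E) * (V ^ n * ν' ^ 2 * ρ)) := by
    have : V ^ (n + p ^ j * k) = V ^ n + ((p ^ E * k : ℕ) : R) * (ν' * V ^ n) +
        (p : R) ^ (2 * E) * (V ^ n * ν' ^ 2 * ρ) := by
      rw [pow_add, pow_mul, hV]
      push_cast
      linear_combination V ^ n * hρ
    have hz' : (p : ℚ_[p]) ^ E * G * z = -ℓ (V ^ n) := mul_div_cancel₀ _ hPG
    rw [this, map_add, map_add, apply_natCast_mul, mul_sub, hz']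
    push_cast
    ring
  rw [hsplit]
  refine (Padic.nonarchimedean _ _).trans
    (max_le ?_ (norm_apply_pow_two_mul_le ℓ hℓ hν (by omega) _))
  rw [norm_mul, norm_mul, hPE, hG]
  calc ((p : ℝ) ^ E)⁻¹ * ‖ℓ ν‖ * ‖(k : ℚ_[p]) - z‖ ≤ ((p : ℝ) ^ E)⁻¹ * ‖ℓ ν‖ * (p : ℝ)⁻¹ := by
        gcongr
    _ = ((p : ℝ) ^ (E + 1))⁻¹ * ‖ℓ ν‖ := by rw [pow_succ, mul_inv]; ring

theorem exists_ge_norm_apply_pow_le (h1 : ‖ℓ 1‖ ≤ ((p : ℝ) ^ (e + 1))⁻¹ * ‖ℓ ν‖) (j : ℕ) :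
    ∃ n ≥ j, ‖ℓ ((1 + (p : R) ^ (e + 1) * ν) ^ n)‖ ≤ ((p : ℝ) ^ (e + 1 + j))⁻¹ * ‖ℓ ν‖ := by
  induction j with
  | zero => exact ⟨0, le_rfl, by simpa using h1⟩
  | succ j ih =>
    obtain ⟨n, hjn, hn⟩ := ih
    obtain ⟨k, hk, hnk⟩ := exists_norm_apply_pow_add_le ℓ hℓ hν hn
    have : 0 < p ^ j * k := Nat.mul_pos (pow_pos (Fact.out : p.Prime).pos j) hk
    exact ⟨n + p ^ j * k, by omega, hnk⟩

theorem frequently_norm_apply_pow_lt (h1 : ‖ℓ 1‖ ≤ ((p : ℝ) ^ (e + 1))⁻¹ * ‖ℓ ν‖) {ε : ℝ}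
    (hε : 0 < ε) : ∃ᶠ n in atTop, ‖ℓ ((1 + (p : R) ^ (e + 1) * ν) ^ n)‖ < ε := by
  have hp : (1 : ℝ) < p := by exact_mod_cast (Fact.out : p.Prime).one_lt
  have hlim : Tendsto (fun j ↦ ((p : ℝ) ^ (e + 1 + j))⁻¹ * ‖ℓ ν‖) atTop (𝓝 0) := by
    simpa [add_comm] using (tendsto_inv_atTop_zero.comp ((tendsto_pow_atTop_atTop_of_one_lt hp).comp
      (tendsto_add_atTop_nat (e + 1)))).mul_const ‖ℓ ν‖
  refine frequently_atTop.mpr fun N ↦ ?_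
  obtain ⟨j, hjε, hjN⟩ := ((hlim.eventually (gt_mem_nhds hε)).and (eventually_ge_atTop N)).exists
  obtain ⟨n, hn, hbound⟩ := exists_ge_norm_apply_pow_le ℓ hℓ hν h1 j
  exact ⟨n, hjN.trans hn, hbound.trans_lt hjε⟩

end Newton

section PadicOrbit

variable {p : ℕ} [Fact p.Prime] {a b c : ℤ} {β : ℚ_[p]}

theorem exists_norm_form_le_norm_form_twist (hβ : a * β ^ 2 + b * β + c ≠ 0) (k : ℕ) :
    ∃ v : ℤ × ℤ, v.1 ≠ 0 ∧ form β (twist a b c v) ≠ 0 ∧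
      ‖form β v‖ ≤ ((p : ℝ) ^ k)⁻¹ * ‖form β (twist a b c v)‖ := by
  have hp : (1 : ℝ) < p := by exact_mod_cast (Fact.out : p.Prime).one_lt
  obtain ⟨m, hm⟩ := pow_unbounded_of_one_lt ‖β‖ hp
  have hq : ‖((p ^ m : ℤ) : ℚ_[p]) * β‖ ≤ 1 := by
    rw [norm_mul, Int.cast_pow, Int.cast_natCast, Padic.norm_p_pow, zpow_neg, zpow_natCast,
      inv_mul_le_iff₀ (by positivity), mul_one]
    exact hm.le
  set T : ℚ_[p] := 2 * ((p ^ m : ℤ) : ℚ_[p]) * (a * β ^ 2 + b * β + c)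
  have hT : 0 < ‖T‖ := norm_pos_iff.mpr (mul_ne_zero (mul_ne_zero two_ne_zero (by
    exact_mod_cast pow_ne_zero m (Fact.out : p.Prime).ne_zero)) hβ)
  set K := ‖2 * (a : ℚ_[p]) * β + b‖
  obtain ⟨r, hr⟩ := exists_nat_norm_sub_lt hq
    (ε := ((p : ℝ) ^ k)⁻¹ * ‖T‖ / (K + 1)) (by positivity)
  refine ⟨(p ^ m, r), pow_ne_zero m (by exact_mod_cast (Fact.out : p.Prime).ne_zero), ?_⟩
  set v : ℤ × ℤ := (p ^ m, r)
  have hu : ‖form β v‖ < ((p : ℝ) ^ k)⁻¹ * ‖T‖ / (K + 1) := by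
    rwa [norm_sub_rev] at hr
  have hε : ((p : ℝ) ^ k)⁻¹ * ‖T‖ / (K + 1) ≤ ‖T‖ / (K + 1) := by
    gcongr
    exact mul_le_of_le_one_left (norm_nonneg _) (inv_le_one_of_one_le₀ (one_le_pow₀ hp.le))
  have hwT : ‖form β (twist a b c v)‖ = ‖T‖ := by
    rw [form_twist, ← norm_neg T]
    refine Padic.norm_eq_of_norm_sub_lt_right ?_
    rw [norm_neg]
    calc ‖(2 * a * β + b) * form β v - 2 * v.1 * (a * β ^ 2 + b * β + c) - -T‖
        = K * ‖form β v‖ := by simp [T, v, K, norm_mul]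
      _ ≤ K * (‖T‖ / (K + 1)) := by gcongr; exact (hu.trans_le hε).le
      _ < ‖T‖ := by
        rw [mul_div_assoc', div_lt_iff₀ (by positivity)]
        nlinarith
  refine ⟨by rw [← norm_pos_iff, hwT]; exact hT, ?_⟩
  rw [hwT]
  exact hu.le.trans (div_le_self (by positivity) (le_add_of_nonneg_left (norm_nonneg _)))

theorem frequently_norm_form_orbit_lt {d : ℤ} {v : ℤ × ℤ} {U ν : ℤ√d} {n₀ e : ℕ} (hn₀ : 0 < n₀)
    (hU : U ^ n₀ = 1 + (p : ℤ√d) ^ (e + 2) * ν) (hν : ¬ (p : ℤ) ∣ ν.im)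
    (hw : form β (twist a b c v) ≠ 0)
    (hu : ‖form β v‖ ≤ ((p : ℝ) ^ (e + 2))⁻¹ * ‖form β (twist a b c v)‖) {ε : ℝ} (hε : 0 < ε) :
    ∃ᶠ n in atTop, ‖form β (orbit a b c (U ^ n) v)‖ < ε := by
  set u := form β v
  set w := form β (twist a b c v)
  let ℓ : ℤ√d →+ ℚ_[p] := AddMonoidHom.mk' (fun g ↦ form β (orbit a b c g v)) fun g h ↦ by
    simp only [form_orbit, Zsqrtd.re_add, Zsqrtd.im_add]; push_cast; ring
  have hℓ (g : ℤ√d) : ℓ g = g.re * u + g.im * w := form_orbit a b c β g v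
  have hp : (1 : ℝ) < p := by exact_mod_cast (Fact.out : p.Prime).one_lt
  have hwpos : 0 < ‖w‖ := norm_pos_iff.mpr hw
  have hint (z : ℤ) (x : ℚ_[p]) : ‖(z : ℚ_[p]) * x‖ ≤ ‖x‖ := by
    rw [norm_mul]; exact mul_le_of_le_one_left (norm_nonneg _) (Padic.norm_int_le_one z)
  have huw : ‖u‖ < ‖w‖ :=
    hu.trans_lt (mul_lt_of_lt_one_left hwpos (inv_lt_one_of_one_lt₀ (one_lt_pow₀ hp (by omega))))
  have hbound (g : ℤ√d) : ‖ℓ g‖ ≤ ‖w‖ := by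
    rw [hℓ]
    exact (Padic.nonarchimedean _ _).trans (max_le ((hint _ _).trans huw.le) (hint _ _))
  have hℓν : ‖ℓ ν‖ = ‖w‖ := by
    have him : ‖(ν.im : ℚ_[p]) * w‖ = ‖w‖ := by
      rw [norm_mul, le_antisymm (Padic.norm_int_le_one _)
        (not_lt.mp (mt Padic.norm_intCast_lt_one_iff.mp hν)), one_mul]
    rw [hℓ, ← him]
    refine Padic.norm_eq_of_norm_sub_lt_right ?_
    rw [add_sub_cancel_right, him]
    exact (hint _ _).trans_lt huw
  have hνw : ‖w‖ * ((p : ℝ) ^ (e + 1))⁻¹ < ‖ℓ ν‖ := by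
    rw [hℓν]
    exact mul_lt_of_lt_one_right hwpos (inv_lt_one_of_one_lt₀ (one_lt_pow₀ hp (by omega)))
  have hfreq := frequently_norm_apply_pow_lt ℓ hbound hνw (by rw [hℓν, hℓ]; simpa using hu) hε
  rw [show e + 1 + 1 = e + 2 from rfl, ← hU] at hfreq
  simp_rw [← pow_mul] at hfreq
  exact (tendsto_id.const_mul_atTop' hn₀).frequently hfreq

theorem exists_frequently_norm_form_orbit_lt (hβ : a * β ^ 2 + b * β + c ≠ 0) {d : ℤ} {U : ℤ√d}
    (hU : U.norm = 1) (hU1 : ∀ n, 0 < n → U ^ n ≠ 1) :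
    ∃ v : ℤ × ℤ, v.1 ≠ 0 ∧ ∀ ε > 0, ∃ᶠ n in atTop, ‖form β (orbit a b c (U ^ n) v)‖ < ε := by
  obtain ⟨n₀, hn₀, hdvd⟩ := exists_pow_sub_one_dvd hU (N := (p : ℤ) ^ 2)
    (pow_ne_zero 2 (by exact_mod_cast (Fact.out : p.Prime).ne_zero))
  have hUn₀ : (U ^ n₀).norm = 1 := by
    rw [show (U ^ n₀).norm = U.norm ^ n₀ from map_pow Zsqrtd.normMonoidHom U n₀, hU, one_pow]
  obtain ⟨e, ν, hUν, hν⟩ :=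
    exists_eq_one_add_pow_mul (Fact.out : p.Prime) hUn₀ (hU1 n₀ hn₀) (by simpa using hdvd)
  obtain ⟨v, hv, hw, hu⟩ := exists_norm_form_le_norm_form_twist (p := p) hβ (e + 2)
  exact ⟨v, hv, fun ε hε ↦ frequently_norm_form_orbit_lt hn₀ hUν hν hw hu hε⟩

end PadicOrbit

end PadicLittlewood

open PadicLittlewood in
/-- Theorem 1.2: if `α ∈ ℝ` is quadratic with minimal polynomial `f ∈ ℤ[X]` and `β ∈ ℚ_p`
satisfies `f(β) ≠ 0`, then `(α, β)` satisfies (EK+). -/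
theorem stmt7 (p : ℕ) [Fact p.Prime] (α : ℝ) (f : Polynomial ℤ)
    (hf : Irreducible f) (hdeg : f.natDegree = 2) (hroot : Polynomial.aeval α f = 0)
    (β : ℚ_[p]) (hβ : Polynomial.aeval β f ≠ 0) :
    sInf {x : ℝ | ∃ q r : ℤ, q ≠ 0 ∧ r ≠ 0 ∧
        x = max |(q : ℝ)| |(r : ℝ)| * |(q : ℝ) * α - (r : ℝ)| *
          ‖(q : ℚ_[p]) * β - (r : ℚ_[p])‖} = 0 := by
  set a := f.coeff 2
  set b := f.coeff 1
  set c := f.coeff 0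
  have hα : Irrational α := irrational_of_irreducible hf (by omega) hroot
  have ha : a ≠ 0 := by simpa [a, leadingCoeff, hdeg] using leadingCoeff_ne_zero.mpr hf.ne_zero
  rw [aeval_eq_of_natDegree_eq_two hdeg] at hroot hβ
  have hδ := two_mul_add_mul_self_eq_of_root hroot
  obtain ⟨U, hU, hlt⟩ := exists_norm_eq_one_abs_lt_one
    (by simpa using (hα.intCast_mul (mul_ne_zero two_ne_zero ha)).add_intCast b) hδ
  obtain ⟨v, hv, hsmall⟩ :=
    exists_frequently_norm_form_orbit_lt hβ hU fun n hn ↦ pow_ne_one_of_abs_lt_one hδ hlt hn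
  obtain ⟨⟨C, hC⟩, hne⟩ := exists_bound_and_eventually_orbit_ne_zero ha hα hroot hU hlt hv
  refine csInf_eq_of_forall_ge_of_forall_gt_exists_lt ⟨_, 1, 1, one_ne_zero, one_ne_zero, rfl⟩
    (by rintro x ⟨q, r, -, -, rfl⟩; positivity) fun ε hε ↦ ?_
  obtain ⟨n, ⟨hq, hr⟩, hn⟩ :=
    (hne.and_frequently (hsmall (ε / (|C| + 1)) (by positivity))).exists
  refine ⟨_, ⟨_, _, hq, hr, rfl⟩, ?_⟩
  calc _ ≤ |C| * (ε / (|C| + 1)) :=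
        mul_le_mul ((hC n).trans (le_abs_self C)) hn.le (norm_nonneg _) (abs_nonneg C)
    _ < ε := by
      rw [mul_div_assoc', div_lt_iff₀ (by positivity)]
      nlinarith [abs_nonneg C]
end

section
/- Let β ∈ ℚ_p be quadratic over ℚ with conjugate σ(β) ≠ β, and let γ, ζ ∈ ℚ(β) ⊂ ℚ_p be such that γ, γβ, ζ are algebraic integers and |σ(ζ)|_p ≤ c. Set q = Tr(γζ) and r = Tr(βγζ). Then q and r are rational integers and |qβ − r|_p ≤ |β − σ(β)|_p · |σ(γ)|_p · |σ(ζ)|_p ≤ |β − σ(β)|_p · c. -/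
lemma padic_norm_le_one' {p : ℕ} [Fact p.Prime] {x : ℚ_[p]} (hx : IsIntegral ℤ x) : ‖x‖ ≤ 1 := by
  have h2 : IsIntegral ℤ_[p] x := hx.tower_top
  obtain ⟨y, hy⟩ := IsIntegrallyClosed.isIntegral_iff.mp h2
  rw [← hy]
  show ‖(y : ℚ_[p])‖ ≤ 1
  rw [← PadicInt.norm_def]
  exact y.norm_le_one

lemma rat_int_of_integral {a : ℚ} (h : IsIntegral ℤ a) : ∃ n : ℤ, (n : ℚ) = a := by
  obtain ⟨n, hn⟩ := IsIntegrallyClosed.isIntegral_iff.mp h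
  exact ⟨n, by rwa [eq_intCast] at hn⟩



set_option maxHeartbeats 1000000 in
/-- Trace construction: with `β` quadratic in `ℚ_p`, `γ, γβ, ζ` algebraic integers in
`ℚ(β)` and `|σ(ζ)|_p ≤ c`, the traces `q = Tr(γζ)`, `r = Tr(βγζ)` are rational integers
and `|qβ − r|_p ≤ |β − σ(β)|_p · |σ(γ)|_p · |σ(ζ)|_p ≤ |β − σ(β)|_p · c`. -/
theorem stmt13 (p : ℕ) [Fact p.Prime] (K : Subfield ℚ_[p])
    (hquad : Module.finrank ℚ K = 2) (σ : K ≃+* K)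
    (β γ ζ : K) (hβ : σ β ≠ β)
    (hγ : IsIntegral ℤ γ) (hγβ : IsIntegral ℤ (γ * β)) (hζ : IsIntegral ℤ ζ)
    (c : ℝ) (hc : ‖((σ ζ : K) : ℚ_[p])‖ ≤ c) :
    ∃ q r : ℤ,
      ((q : K) = γ * ζ + σ (γ * ζ)) ∧
      ((r : K) = β * γ * ζ + σ (β * γ * ζ)) ∧
      ‖(q : ℚ_[p]) * (β : ℚ_[p]) - (r : ℚ_[p])‖ ≤
        ‖(β : ℚ_[p]) - ((σ β : K) : ℚ_[p])‖ * ‖((σ γ : K) : ℚ_[p])‖ * ‖((σ ζ : K) : ℚ_[p])‖ ∧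
      ‖(q : ℚ_[p]) * (β : ℚ_[p]) - (r : ℚ_[p])‖ ≤
        ‖(β : ℚ_[p]) - ((σ β : K) : ℚ_[p])‖ * c := by
  have hσrat : ∀ a : ℚ, σ (a : K) = (a : K) := fun a => map_ratCast σ.toRingHom a
  have hβQ : ∀ r : ℚ, (r : K) ≠ β := by
    intro r hr; exact hβ (by rw [← hr, hσrat])
  have hli : LinearIndependent ℚ ![(1:K), β] := by
    rw [LinearIndependent.pair_iff]
    intro s t hst
    rw [Rat.smul_def, Rat.smul_def, mul_one] at hst
    by_cases ht : t = 0
    · subst ht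
      simp only [Rat.cast_zero, zero_mul, add_zero] at hst
      exact ⟨by exact_mod_cast hst, rfl⟩
    · exfalso
      apply hβQ (-s/t)
      have h0 : (t:K) ≠ 0 := by exact_mod_cast ht
      push_cast
      field_simp
      linear_combination -hst
  have hfin : FiniteDimensional ℚ K := FiniteDimensional.of_finrank_eq_succ hquad
  have hsp : Submodule.span ℚ (Set.range ![(1:K), β]) = ⊤ :=
    hli.span_eq_top_of_card_eq_finrank (by simp [hquad])
  have hmem : ∀ x : K, ∃ a b : ℚ, x = (a:K) + (b:K) * β := by
    intro x
    have : x ∈ Submodule.span ℚ ({(1:K), β} : Set K) := by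
      rw [show ({(1:K), β} : Set K) = Set.range ![(1:K), β] by
        simp [Matrix.range_cons, Set.pair_comm], hsp]
      trivial
    obtain ⟨a, b, hab⟩ := Submodule.mem_span_pair.mp this
    exact ⟨a, b, by rw [← hab, Rat.smul_def, Rat.smul_def, mul_one]⟩
  -- quadratic relation for β
  obtain ⟨cq, dq, hcd⟩ := hmem (β * β)
  -- σ β = dq - β
  have hσβ : σ β = (dq : K) - β := by
    have hroot : σ β * σ β = (cq:K) + (dq:K) * σ β := by
      rw [← map_mul, hcd, map_add, map_mul, hσrat, hσrat]
    have hfact : (σ β - β) * (σ β - ((dq:K) - β)) = 0 := by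
      linear_combination hroot - hcd
    rcases mul_eq_zero.mp hfact with h | h
    · exact absurd (sub_eq_zero.mp h) hβ
    · exact sub_eq_zero.mp h
  -- σ is an involution
  have hσσ : ∀ x : K, σ (σ x) = x := by
    intro x
    obtain ⟨a, b, hab⟩ := hmem x
    rw [hab]
    simp only [map_add, map_mul, hσrat, hσβ, map_sub]
    ring
  -- fixed elements are rational
  have hfix : ∀ x : K, σ x = x → ∃ a : ℚ, (a : K) = x := by
    intro x hx
    obtain ⟨a, b, hab⟩ := hmem x
    have : (b:K) * ((dq:K) - 2 * β) = 0 := by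
      have := hx
      rw [hab, map_add, map_mul, hσrat, hσrat, hσβ] at this
      linear_combination this
    rcases mul_eq_zero.mp this with h | h
    · have hb : b = 0 := by exact_mod_cast h
      exact ⟨a, by rw [hab, hb]; push_cast; ring⟩
    · exfalso
      apply hβQ (dq / 2)
      have : (dq : K) = 2 * β := by linear_combination h
      push_cast
      rw [this]; ring
  -- extract an integer from a fixed integral element
  have hint : ∀ x : K, σ x = x → IsIntegral ℤ x → ∃ n : ℤ, (n : K) = x := by
    intro x hx hxi
    obtain ⟨a, ha⟩ := hfix x hx
    have haK : algebraMap ℚ K a = x := by rw [eq_ratCast, ha]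
    have hai : IsIntegral ℤ a := by
      rw [← isIntegral_algebraMap_iff (algebraMap ℚ K).injective, haK]
      exact hxi
    obtain ⟨n, hn⟩ := rat_int_of_integral hai
    exact ⟨n, by rw [← ha, ← hn]; push_cast; ring⟩
  -- the algebra hom version of σ and of the inclusion
  have hσint : ∀ x : K, IsIntegral ℤ x → IsIntegral ℤ (σ x) :=
    fun x hx => hx.map σ.toRingHom.toIntAlgHom
  -- construct q and r
  obtain ⟨q, hq⟩ := hint (γ * ζ + σ (γ * ζ))
    (by rw [map_add, hσσ]; ring)
    ((hγ.mul hζ).add (hσint _ (hγ.mul hζ)))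
  obtain ⟨r, hr⟩ := hint (β * γ * ζ + σ (β * γ * ζ))
    (by rw [map_add, hσσ]; ring)
    (by
      have h1 : IsIntegral ℤ (β * γ * ζ) := by
        have := hγβ.mul hζ
        rwa [show γ * β * ζ = β * γ * ζ by ring] at this
      exact h1.add (hσint _ h1))
  have hid : (q:K) * β - (r:K) = σ γ * σ ζ * (β - σ β) := by
    rw [hq, hr, map_mul, map_mul, map_mul]; ring
  have hidp : (q:ℚ_[p]) * (β:ℚ_[p]) - (r:ℚ_[p]) =
      ((σ γ : K):ℚ_[p]) * ((σ ζ : K):ℚ_[p]) * ((β:ℚ_[p]) - ((σ β : K):ℚ_[p])) := by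
    have h := congrArg (K.subtype) hid
    simp only [map_sub, map_mul, map_intCast, Subfield.coe_subtype] at h
    exact h
  have hnorm : ‖(q : ℚ_[p]) * (β : ℚ_[p]) - (r : ℚ_[p])‖ =
      ‖(β : ℚ_[p]) - ((σ β : K) : ℚ_[p])‖ * ‖((σ γ : K) : ℚ_[p])‖ * ‖((σ ζ : K) : ℚ_[p])‖ := by
    rw [hidp, norm_mul, norm_mul]; ring
  have hγ1 : ‖((σ γ : K) : ℚ_[p])‖ ≤ 1 :=
    padic_norm_le_one' ((hσint γ hγ).map K.subtype.toIntAlgHom)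
  refine ⟨q, r, hq, hr, le_of_eq hnorm, ?_⟩
  rw [hnorm]
  calc ‖(β : ℚ_[p]) - ((σ β : K) : ℚ_[p])‖ * ‖((σ γ : K) : ℚ_[p])‖ * ‖((σ ζ : K) : ℚ_[p])‖
      ≤ ‖(β : ℚ_[p]) - ((σ β : K) : ℚ_[p])‖ * 1 * c := by
        gcongr
    _ = ‖(β : ℚ_[p]) - ((σ β : K) : ℚ_[p])‖ * c := by ring
end

section
/- Let α be a real quadratic number with conjugates ψ(α) ≠ σ(ψ(α)) under an embedding into the algebraic closure of ℚ_p, and let β ∈ ℚ_p with β ≠ ψ(α), β ≠ σ(ψ(α)), and let ε > 0 and η ∈ ℚ_p(ψ(α)) with |η|_p = 1. Then there exists a nonzero γ = x + yα with x, y ∈ ℤ such that |((β − σ(ψ(α)))σ(ψ(γ)))/((β − ψ(α))ψ(γ)) + 1|_p < ε. -/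
lemma quad_expand {L : Type*} [Field L] [CharZero L] (f : Polynomial ℚ)
    (hdeg : f.degree = 2) (x : L) (hx : Polynomial.aeval x f = 0) :
    (f.coeff 2 : L) * x ^ 2 + (f.coeff 1 : L) * x + (f.coeff 0 : L) = 0 := by
  have hnd : f.natDegree = 2 := Polynomial.natDegree_eq_of_degree_eq_some hdeg
  have := Polynomial.aeval_eq_sum_range (R := ℚ) (S := L) (p := f) (x := x)
  rw [hx, hnd] at this
  simp [Finset.sum_range_succ, Rat.smul_def] at this
  linear_combination -this

lemma no_rat_root {L : Type*} [Field L] [CharZero L] (f : Polynomial ℚ)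
    (hf : Irreducible f) (hdeg : f.degree = 2) (q : ℚ) (x : L)
    (hx : Polynomial.aeval x f = 0) : (q : L) ≠ x := by
  intro h
  have hq : f.eval q = 0 := by
    have h1 : Polynomial.aeval (algebraMap ℚ L q) f = 0 := by
      rw [eq_ratCast (algebraMap ℚ L) q, h]; exact hx
    rw [Polynomial.aeval_algebraMap_apply_eq_algebraMap_eval] at h1
    exact (map_eq_zero (algebraMap ℚ L)).mp h1
  obtain ⟨g, hg⟩ := (Polynomial.dvd_iff_isRoot.mpr hq :
    (Polynomial.X - Polynomial.C q) ∣ f)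
  rcases hf.isUnit_or_isUnit hg with h1 | h2
  · exact Polynomial.not_isUnit_X_sub_C q h1
  · have : f.degree = 1 := by
      rw [hg, Polynomial.degree_mul, Polynomial.degree_X_sub_C,
        Polynomial.degree_eq_zero_of_isUnit h2]
      rfl
    rw [this] at hdeg; exact (by norm_num : (1 : WithBot ℕ) ≠ 2) hdeg

/-- Lemma 3.1: with `a ≠ a'` the conjugates (in an extension `L` of `ℚ_p`) of a real
quadratic number, and `β ∈ ℚ_p` different from both, for every `ε > 0` there is a
nonzero `γ = x + yα` (`x, y ∈ ℤ`) with
`|((β − σψ(α))·σψ(γ))/((β − ψ(α))·ψ(γ)) + 1|_p < ε`. -/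
theorem stmt18 (p : ℕ) [Fact p.Prime] (L : Type*) [NontriviallyNormedField L]
    [NormedAlgebra ℚ_[p] L] [CharZero L]
    (f : Polynomial ℚ) (hf : Irreducible f) (hdeg : f.degree = 2)
    (αR : ℝ) (hαR : Polynomial.aeval αR f = 0)
    (a a' : L) (ha : Polynomial.aeval a f = 0) (ha' : Polynomial.aeval a' f = 0)
    (hne : a ≠ a')
    (β : ℚ_[p]) (hβ1 : algebraMap ℚ_[p] L β ≠ a) (hβ2 : algebraMap ℚ_[p] L β ≠ a')
    (ε : ℝ) (hε : 0 < ε) (η : L) (hη : ‖η‖ = 1) :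
    ∃ x y : ℤ, ((x : L) + (y : L) * a ≠ 0) ∧
      ‖(algebraMap ℚ_[p] L β - a') * ((x : L) + (y : L) * a') /
          ((algebraMap ℚ_[p] L β - a) * ((x : L) + (y : L) * a)) + 1‖ < ε := by
  set B := algebraMap ℚ_[p] L β with hB
  have hBa : B - a ≠ 0 := sub_ne_zero.mpr hβ1
  have hBa' : B - a' ≠ 0 := sub_ne_zero.mpr hβ2
  -- trace and norm of the quadratic
  have hc2 : f.coeff 2 ≠ 0 := by
    have : f.natDegree = 2 := Polynomial.natDegree_eq_of_degree_eq_some hdeg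
    rw [← this]
    exact Polynomial.leadingCoeff_ne_zero.mpr hf.ne_zero
  have Ea := quad_expand f hdeg a ha
  have Ea' := quad_expand f hdeg a' ha'
  set T : ℚ := -f.coeff 1 / f.coeff 2 with hTdef
  set P : ℚ := f.coeff 0 / f.coeff 2 with hPdef
  have hc2L : (f.coeff 2 : L) ≠ 0 := by exact_mod_cast hc2
  have hT : (T : L) = a + a' := by
    have hsub : (f.coeff 2 : L) * (a ^ 2 - a' ^ 2) + (f.coeff 1 : L) * (a - a') = 0 := by
      linear_combination Ea - Ea'
    have hfac : (a - a') * ((f.coeff 2 : L) * (a + a') + (f.coeff 1 : L)) = 0 := by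
      linear_combination hsub
    have h2 : (f.coeff 2 : L) * (a + a') + (f.coeff 1 : L) = 0 :=
      (mul_eq_zero.mp hfac).resolve_left (sub_ne_zero.mpr hne)
    rw [hTdef]
    push_cast
    field_simp
    linear_combination -h2
  have hP : (P : L) = a * a' := by
    have h2 : (f.coeff 2 : L) * (a + a') + (f.coeff 1 : L) = 0 := by
      have : ((-f.coeff 1 / f.coeff 2 : ℚ) : L) = a + a' := hT
      push_cast at this
      field_simp at this
      linear_combination -this
    have h3 : (f.coeff 2 : L) * (a * (a + a') - a * a') + (f.coeff 1 : L) * a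
        + (f.coeff 0 : L) = 0 := by linear_combination Ea
    rw [hPdef]; push_cast; field_simp
    linear_combination h3 - a*h2
  -- the map from ℚ_[p]
  have hmap : ∀ q : ℚ, algebraMap ℚ_[p] L (q : ℚ_[p]) = (q : L) := fun q =>
    map_ratCast (algebraMap ℚ_[p] L) q
  by_cases hD : 2 * β - (T : ℚ_[p]) = 0
  · -- degenerate case: take γ = 1
    refine ⟨1, 0, by norm_num, ?_⟩
    have h2B : 2 * B - (T : L) = 0 := by
      have := congrArg (algebraMap ℚ_[p] L) hD
      simpa [map_sub, map_mul, map_ofNat, hmap, hB] using this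
    have : (B - a') * ((1 : L) + (0 : L) * a') / ((B - a) * ((1 : L) + (0 : L) * a)) + 1 = 0 := by
      field_simp
      linear_combination h2B + hT
    push_cast
    rw [this]
    simpa using hε
  · -- generic case
    set c : ℚ_[p] := β * (T : ℚ_[p]) - ((T : ℚ_[p]) ^ 2 - 2 * (P : ℚ_[p])) with hc
    set t₁ : ℚ_[p] := -c / (2 * β - (T : ℚ_[p])) with ht₁
    set φ : ℚ_[p] → L := fun t =>
      (B - a') * (algebraMap ℚ_[p] L t + a') / ((B - a) * (algebraMap ℚ_[p] L t + a)) + 1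
      with hφ
    -- key identity
    have hkey : ∀ t : ℚ_[p],
        (B - a') * (algebraMap ℚ_[p] L t + a') + (B - a) * (algebraMap ℚ_[p] L t + a)
          = algebraMap ℚ_[p] L (t * (2 * β - (T : ℚ_[p])) + c) := by
      intro t
      have hTL : algebraMap ℚ_[p] L (T : ℚ_[p]) = (T : L) := hmap T
      have hPL : algebraMap ℚ_[p] L (P : ℚ_[p]) = (P : L) := hmap P
      rw [hc]
      push_cast [map_add, map_mul, map_sub, map_pow, map_ofNat, hTL, hPL, hB]
      rw [hT, hP]
      ring
    have hzero : (B - a') * (algebraMap ℚ_[p] L t₁ + a')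
        + (B - a) * (algebraMap ℚ_[p] L t₁ + a) = 0 := by
      rw [hkey t₁, ht₁]
      field_simp
      simp
    have hden : algebraMap ℚ_[p] L t₁ + a ≠ 0 := by
      intro h
      rw [h, mul_zero, add_zero, mul_eq_zero] at hzero
      rcases hzero with h1 | h1
      · exact hBa' h1
      · apply hne
        have : algebraMap ℚ_[p] L t₁ + a' = 0 := h1
        have h2 : a = -algebraMap ℚ_[p] L t₁ := by linear_combination h
        have h3 : a' = -algebraMap ℚ_[p] L t₁ := by linear_combination this
        rw [h2, h3]
    have hden0 : (B - a) * (algebraMap ℚ_[p] L t₁ + a) ≠ 0 := mul_ne_zero hBa hden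
    have hφt₁ : φ t₁ = 0 := by
      rw [hφ]
      simp only
      rw [div_add_one hden0]
      rw [show (B - a') * (algebraMap ℚ_[p] L t₁ + a') + (B - a) * (algebraMap ℚ_[p] L t₁ + a)
        = 0 from hzero, zero_div]
    -- continuity of φ at t₁
    have hcont : ContinuousAt φ t₁ := by
      apply ContinuousAt.add _ continuousAt_const
      apply ContinuousAt.div
      · exact (continuousAt_const.mul (((continuous_algebraMap ℚ_[p] L).continuousAt).add
          continuousAt_const))
      · exact (continuousAt_const.mul (((continuous_algebraMap ℚ_[p] L).continuousAt).add
          continuousAt_const))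
      · exact hden0
    have htend : Filter.Tendsto φ (nhds t₁) (nhds 0) := by
      rw [← hφt₁]; exact hcont
    obtain ⟨δ, hδpos, hδ⟩ := Metric.eventually_nhds_iff.mp
      (htend.eventually (Metric.ball_mem_nhds (0 : L) hε))
    obtain ⟨r, hr⟩ := Padic.rat_dense p t₁ hδpos
    have hrδ : ‖φ (r : ℚ_[p])‖ < ε := by
      have := hδ (y := (r : ℚ_[p])) (by rw [dist_eq_norm]; simpa [norm_sub_rev] using hr)
      simpa [dist_eq_norm] using this
    refine ⟨r.num, (r.den : ℤ), ?_, ?_⟩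
    · intro h
      have hdenom : ((r.den : ℤ) : L) ≠ 0 := by
        exact_mod_cast (Nat.cast_ne_zero (R := L)).mpr r.den_nz
      apply no_rat_root f hf hdeg (-r.num / r.den) a ha
      push_cast
      push_cast at h
      field_simp
      linear_combination -h
    · have hrL : ∀ z : L, ((r.num : L) + ((r.den : ℤ) : L) * z) = (r.den : L) * ((r : L) + z) := by
        intro z
        have : (r : L) = (r.num : L) / (r.den : L) := by
          rw [Rat.cast_def]
        rw [this]
        have hd : (r.den : L) ≠ 0 := (Nat.cast_ne_zero (R := L)).mpr r.den_nz
        field_simp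
        push_cast
        ring
      have hcast : algebraMap ℚ_[p] L (r : ℚ_[p]) = (r : L) := hmap r
      have hd : (r.den : L) ≠ 0 := (Nat.cast_ne_zero (R := L)).mpr r.den_nz
      calc ‖(B - a') * ((r.num : L) + ((r.den : ℤ) : L) * a') /
          ((B - a) * ((r.num : L) + ((r.den : ℤ) : L) * a)) + 1‖
          = ‖φ (r : ℚ_[p])‖ := by
            rw [hφ]
            congr 2
            rw [hrL a, hrL a', hcast]
            rw [show (B - a') * ((r.den : L) * ((r : L) + a')) = (r.den : L) * ((B - a') * ((r : L) + a')) by ring,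
              show (B - a) * ((r.den : L) * ((r : L) + a)) = (r.den : L) * ((B - a) * ((r : L) + a)) by ring,
              mul_div_mul_left _ _ hd]
        _ < ε := hrδ
end
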